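/- Assume (J) and (F2'), and suppose c_β ∈ ℝ for every 0 < β ≤ +∞. Let β_n → +∞ and, for each n, let A_n ∈ F be optimal for J_{β_n} at c_{β_n} (i.e. sup_{A_n} J_{β_n} = c_{β_n}). Then A_∞ := limsup_n A_n belongs to F and is optimal for J_∞ at c_∞, i.e. sup_{x ∈ A_∞} J_∞(x) = c_∞. -/

import Mathlib

/-!
On `A_n` we have `J_{β_n} ≤ c_{β_n} ≤ c_∞`, hence by monotonicity `J_β ≤ c_∞` on `A_n` as soon as
`β ≤ β_n`. Taking `β = min_n β_n > 0` gives the hypothesis of (F2'), so `A_∞ ∈ F`; and since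
`{J_β ≤ c_∞}` is closed, the bound passes to `A_∞` for every `β`, i.e. `sup_{A_∞} J_∞ ≤ c_∞`.
The reverse inequality is the definition of `c_∞`.
-/

open Filter Topology

/-- Kuratowski limit superior of a sequence of subsets of a metric space. -/
def SeqLimsup {X : Type*} [MetricSpace X] (A : ℕ → Set X) : Set X :=
  {x | ∃ φ : ℕ → ℕ, StrictMono φ ∧
    ∃ y : ℕ → X, (∀ n, y n ∈ A (φ n)) ∧ Tendsto y atTop (𝓝 x)}

def minimaxLevel {X α : Type*} [CompleteLattice α] (F : Set (Set X)) (f : X → α) : α :=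
  ⨅ A ∈ F, ⨆ x ∈ A, f x

section MinimaxLevel

variable {X α : Type*} [CompleteLattice α] {F : Set (Set X)}

lemma minimaxLevel_mono {f g : X → α} (h : f ≤ g) : minimaxLevel F f ≤ minimaxLevel F g :=
  iInf₂_mono fun _ _ => iSup₂_mono fun x _ => h x

lemma minimaxLevel_le {A : Set X} (hA : A ∈ F) (f : X → α) :
    minimaxLevel F f ≤ ⨆ x ∈ A, f x :=
  iInf₂_le A hA

end MinimaxLevel

lemma exists_pos_forall_le_of_tendsto_atTop {b : ℕ → ℝ} (hpos : ∀ n, 0 < b n)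
    (hb : Tendsto b atTop atTop) : ∃ β₀, 0 < β₀ ∧ ∀ n, β₀ ≤ b n := by
  obtain ⟨n₀, hn₀⟩ := (Nat.cofinite_eq_atTop ▸ hb).exists_forall_le
  exact ⟨b n₀, hpos n₀, hn₀⟩

lemma LowerSemicontinuous.le_of_mem_seqLimsup {X γ : Type*} [MetricSpace X] [LinearOrder γ]
    [TopologicalSpace γ] [ClosedIciTopology γ] {f : X → γ} (hf : LowerSemicontinuous f)
    {A : ℕ → Set X} {c : γ} (hA : ∀ᶠ n in atTop, ∀ y ∈ A n, f y ≤ c) {x : X}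
    (hx : x ∈ SeqLimsup A) : f x ≤ c := by
  obtain ⟨φ, hφ, y, hy, hyx⟩ := hx
  exact (hf.isClosed_preimage c).mem_of_tendsto hyx
    ((hφ.tendsto_atTop.eventually hA).mono fun k hk => hk (y k) (hy k))

theorem optimal_sets_converge_general {X : Type*} [MetricSpace X]
    (F : Set (Set X)) (J : ℝ → X → EReal)
    -- each J_β, β > 0, is lower semicontinuous
    (hlsc : ∀ β : ℝ, 0 < β → LowerSemicontinuous (J β))
    -- assumption (J): monotonicity in β on (0, +∞)
    (hmono : ∀ β₁ β₂ : ℝ, 0 < β₁ → β₁ ≤ β₂ → ∀ x, J β₁ x ≤ J β₂ x)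
    -- the limit functional J_∞
    (Jinf : X → EReal) (hJinf : ∀ x, Jinf x = ⨆ β : ℝ, ⨆ _ : 0 < β, J β x)
    -- the minimax levels c_β, 0 < β < +∞
    (cβ : ℝ → EReal) (hcβ : ∀ β : ℝ, cβ β = ⨅ A ∈ F, ⨆ x ∈ A, J β x)
    -- the minimax level c_∞ is real
    (cinf : ℝ) (hcinf : (⨅ A ∈ F, ⨆ x ∈ A, Jinf x) = (cinf : EReal))
    -- assumption (F2')
    (hF2' : ∀ A : ℕ → Set X, (∀ n, A n ∈ F) →
      (∃ β : ℝ, 0 < β ∧ ∀ n, ∀ x ∈ A n, J β x ≤ (cinf : EReal) + 1) →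
      SeqLimsup A ∈ F)
    -- a sequence β_n → +∞
    (b : ℕ → ℝ) (hbpos : ∀ n, 0 < b n) (hb : Tendsto b atTop atTop)
    -- A_n ∈ F optimal for J_{β_n} at c_{β_n}
    (A : ℕ → Set X) (hA : ∀ n, A n ∈ F)
    (hopt : ∀ n, (⨆ x ∈ A n, J (b n) x) = cβ (b n)) :
    SeqLimsup A ∈ F ∧ (⨆ x ∈ SeqLimsup A, Jinf x) = (cinf : EReal) := by
  have hJ_le_Jinf : ∀ β, 0 < β → J β ≤ Jinf := fun β hβ x =>
    hJinf x ▸ le_iSup₂ (f := fun β (_ : 0 < β) => J β x) β hβ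
  have hbound : ∀ β, 0 < β → ∀ n, β ≤ b n → ∀ x ∈ A n, J β x ≤ cinf := fun β hβ n hβn x hx =>
    calc J β x ≤ J (b n) x := hmono β (b n) hβ hβn x
      _ ≤ ⨆ x ∈ A n, J (b n) x := le_iSup₂ (f := fun x (_ : x ∈ A n) => J (b n) x) x hx
      _ = minimaxLevel F (J (b n)) := (hopt n).trans (hcβ (b n))
      _ ≤ minimaxLevel F Jinf := minimaxLevel_mono (hJ_le_Jinf (b n) (hbpos n))
      _ = cinf := hcinf
  obtain ⟨β₀, hβ₀, hβ₀b⟩ := exists_pos_forall_le_of_tendsto_atTop hbpos hb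
  have hmem : SeqLimsup A ∈ F := hF2' A hA ⟨β₀, hβ₀, fun n x hx =>
    (hbound β₀ hβ₀ n (hβ₀b n) x hx).trans (by exact_mod_cast (lt_add_one cinf).le)⟩
  refine ⟨hmem, le_antisymm (iSup₂_le fun x hx => ?_) (hcinf ▸ minimaxLevel_le hmem Jinf)⟩
  rw [hJinf]
  exact iSup₂_le fun β hβ => (hlsc β hβ).le_of_mem_seqLimsup
    ((hb.eventually_ge_atTop β).mono fun n hn => hbound β hβ n hn) hx

/-- Assume (J) and (F2'), and suppose the minimax levels are real. If
`β_n → +∞` and each `A_n ∈ F` is optimal for `J_{β_n}` at `c_{β_n}`, then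
`A_∞ := limsup_n A_n` belongs to `F` and is optimal for `J_∞` at `c_∞`. -/
theorem optimal_sets_converge {X : Type*} [MetricSpace X]
    (F : Set (Set X)) (J : ℝ → X → EReal)
    -- each J_β, β > 0, is lower semicontinuous
    (hlsc : ∀ β : ℝ, 0 < β → LowerSemicontinuous (J β))
    -- assumption (J): monotonicity in β on (0, +∞)
    (hmono : ∀ β₁ β₂ : ℝ, 0 < β₁ → β₁ ≤ β₂ → ∀ x, J β₁ x ≤ J β₂ x)
    -- the limit functional J_∞
    (Jinf : X → EReal) (hJinf : ∀ x, Jinf x = ⨆ β : ℝ, ⨆ _ : 0 < β, J β x)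
    -- the minimax levels c_β, 0 < β < +∞
    (cβ : ℝ → EReal) (hcβ : ∀ β : ℝ, cβ β = ⨅ A ∈ F, ⨆ x ∈ A, J β x)
    -- the minimax level c_∞ is real
    (cinf : ℝ) (hcinf : (⨅ A ∈ F, ⨆ x ∈ A, Jinf x) = (cinf : EReal))
    -- the minimax levels c_β are real
    (hcreal : ∀ β : ℝ, 0 < β → ∃ r : ℝ, cβ β = (r : EReal))
    -- assumption (F2')
    (hF2' : ∀ A : ℕ → Set X, (∀ n, A n ∈ F) →
      (∃ β : ℝ, 0 < β ∧ ∀ n, ∀ x ∈ A n, J β x ≤ (cinf : EReal) + 1) →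
      SeqLimsup A ∈ F)
    -- a sequence β_n → +∞
    (b : ℕ → ℝ) (hbpos : ∀ n, 0 < b n) (hb : Tendsto b atTop atTop)
    -- A_n ∈ F optimal for J_{β_n} at c_{β_n}
    (A : ℕ → Set X) (hA : ∀ n, A n ∈ F)
    (hopt : ∀ n, (⨆ x ∈ A n, J (b n) x) = cβ (b n)) :
    SeqLimsup A ∈ F ∧ (⨆ x ∈ SeqLimsup A, Jinf x) = (cinf : EReal) :=
  optimal_sets_converge_general F J hlsc hmono Jinf hJinf cβ hcβ cinf hcinf hF2' b hbpos hb A hA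
    hopt
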